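/- arXiv:1909.02797 — 4 statements merged into one kernel-verified Lean document; each statement's English description precedes it below -/
import Mathlib

section
/- Let 𝔤 be a finite-dimensional Lie algebra over a field of characteristic zero admitting a nonsingular (i.e., invertible) derivation. Then 𝔤 is nilpotent. -/
/-!
Extending scalars to the algebraic closure keeps `D` injective, and nilpotency descends along the
faithfully flat extension, so assume the field algebraically closed. Then `L` is the sum of the
generalized eigenspaces `L_α` of `D`, with `⁅L_α, L_β⁆ ⊆ L_(α + β)` and `L_0 = 0`. For `α ≠ 0`
the degrees `β + n α` are pairwise distinct in characteristic zero, so every element of `L_α` is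
ad-nilpotent. Engel's argument, run over `D`-stable subalgebras, upgrades this to all of `L`: a
maximal `D`-stable subalgebra `H` of ad-nilpotent elements is properly contained in its normalizer,
which is again `D`-stable and so contains a generalized eigenvector `y ∉ H` with `D y ∈ K y + H`;
then `K y + H` is a larger such subalgebra.
-/

open Finset Module LieAlgebra LieModule TensorProduct

namespace Module.End

section CommRing

variable {R M : Type*} [CommRing R] [AddCommGroup M] [Module R M]

theorem maxGenEigenspace_zero_eq_bot {f : End R M} (hf : Function.Injective f) :
    f.maxGenEigenspace 0 = ⊥ := by
  refine eq_bot_iff.mpr fun x hx ↦ ?_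
  obtain ⟨k, hk⟩ := (mem_maxGenEigenspace _ _ _).mp hx
  rw [zero_smul, sub_zero, coe_pow, ← iterate_map_zero f k] at hk
  exact hf.iterate k hk

theorem pow_apply_lie_of_apply_lie {L : Type*} [LieRing L] [LieAlgebra R L] {A B C : End R L}
    (h : ∀ u v, C ⁅u, v⁆ = ⁅A u, v⁆ + ⁅u, B v⁆) (n : ℕ) (u v : L) :
    (C ^ n) ⁅u, v⁆ = ∑ ij ∈ antidiagonal n, n.choose ij.1 • ⁅(A ^ ij.1) u, (B ^ ij.2) v⁆ := by
  induction n with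
  | zero => simp
  | succ n ih =>
    rw [sum_antidiagonal_choose_succ_nsmul (fun i j ↦ ⁅(A ^ i) u, (B ^ j) v⁆) n]
    simp only [pow_succ', mul_apply, ih, map_sum, map_nsmul, h, nsmul_add, sum_add_distrib]
    rw [add_comm, add_left_cancel_iff, sum_congr rfl]
    rintro ⟨i, j⟩ hij
    rw [Nat.choose_symm_of_eq_add (mem_antidiagonal.mp hij).symm]

end CommRing

variable {K V : Type*} [Field K] [AddCommGroup V] [Module K V]

theorem exists_mem_maxGenEigenspace_notMem [FiniteDimensional K V] {f : End K V}
    (hf : ⨆ μ, f.maxGenEigenspace μ = ⊤) {p q : Submodule K V} (hp : ∀ x ∈ p, f x ∈ p)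
    (hpq : ¬p ≤ q) : ∃ μ, ∃ y ∈ p, y ∈ f.maxGenEigenspace μ ∧ y ∉ q ∧ f y - μ • y ∈ q := by
  rw [Submodule.eq_iSup_inf_genEigenspace ⊤ hp hf, iSup_le_iff] at hpq
  obtain ⟨μ, hμ⟩ := not_forall.mp hpq
  obtain ⟨v, ⟨hvp, hvμ⟩, hvq⟩ := SetLike.not_le_iff_exists.mp hμ
  set g := f - μ • 1
  obtain ⟨k, hk⟩ := (mem_maxGenEigenspace _ _ _).mp hvμ
  obtain ⟨n, hn, hn'⟩ := Nat.exists_not_and_succ_of_not_zero_of_exists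
    (p := fun n ↦ (g ^ n) v ∈ q) (by simpa using hvq) ⟨k, hk ▸ q.zero_mem⟩
  have hgp (x : V) (hx : x ∈ p) : g x ∈ p := p.sub_mem (hp x hx) (p.smul_mem μ hx)
  have hgμ (x : V) (hx : x ∈ f.maxGenEigenspace μ) : g x ∈ f.maxGenEigenspace μ :=
    mapsTo_maxGenEigenspace_of_comm ((Commute.refl f).sub_right
      ((Commute.one_right f).smul_right μ)) μ hx
  refine ⟨μ, (g ^ n) v, pow_apply_mem_of_forall_mem n hgp v hvp,
    pow_apply_mem_of_forall_mem n hgμ v hvμ, hn, ?_⟩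
  simpa [g, pow_succ', mul_apply] using hn'

end Module.End

namespace LieSubalgebra

variable {R L : Type*} [CommRing R] [LieRing L] [LieAlgebra R L] {H : LieSubalgebra R L} {y : L}

def supSpanSingleton (hy : y ∈ H.normalizer) : LieSubalgebra R L :=
  { R ∙ y ⊔ H.toSubmodule with lie_mem' := lie_mem_sup_of_mem_normalizer hy }

variable [IsNoetherian R L]

theorem lt_normalizer_of_forall_isNilpotent_ad (hH : ∀ x ∈ H, IsNilpotent (ad R L x))
    (hne : H ≠ ⊤) : H < H.normalizer := by
  refine H.le_normalizer.lt_of_ne fun h ↦ ?_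
  have : Nontrivial (L ⧸ H.toLieSubmodule) :=
    Submodule.Quotient.nontrivial_iff.mpr (by rwa [coe_toLieSubmodule, Ne, toSubmodule_eq_top])
  have : IsNilpotent H (L ⧸ H.toLieSubmodule) :=
    (LieModule.isNilpotent_iff_forall (R := R)).mpr fun x ↦
      End.IsNilpotent.mapQ (f := ad R L x) (p := H.toSubmodule) (fun _ hz ↦ H.lie_mem x.2 hz)
        (hH x x.2)
  exact (LieSubmodule.nontrivial_iff_ne_bot R H _).mp (nontrivial_max_triv_of_isNilpotent R H _)
    ((H.normalizer_eq_self_iff).mp h.symm)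

theorem isNilpotent_ad_of_mem_supSpanSingleton (hH : ∀ x ∈ H, IsNilpotent (ad R L x))
    (hyN : y ∈ H.normalizer) (hy : IsNilpotent (ad R L y)) {z : L}
    (hz : z ∈ supSpanSingleton hyN) : IsNilpotent (ad R L z) := by
  set H' := supSpanSingleton hyN
  have hyH' : y ∈ H' := Submodule.mem_sup_left (Submodule.mem_span_singleton_self y)
  have hHH' : H ≤ H' := (toSubmodule_le_toSubmodule H H').mp le_sup_right
  have hH'N : H' ≤ H.normalizer := by
    rw [← toSubmodule_le_toSubmodule]
    exact sup_le ((Submodule.span_singleton_le_iff_mem _ _).mpr hyN) H.le_normalizer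
  obtain ⟨I, hI⟩ := exists_nested_lieIdeal_ofLe_normalizer hHH' hH'N
  have hspan : R ∙ (⟨y, hyH'⟩ : H') ⊔ I.toSubmodule = ⊤ := by
    rw [← LieIdeal.toLieSubalgebra_toSubmodule R H' I, hI]
    apply Submodule.map_injective_of_injective (H' : Submodule R L).injective_subtype
    simp only [coe_ofLe, Submodule.map_sup, Submodule.map_subtype_range_inclusion,
      Submodule.map_top, Submodule.range_subtype]
    rw [Submodule.map_subtype_span_singleton]
    rfl
  have hIL : IsNilpotent I L := by
    refine (LieModule.isNilpotent_iff_forall (R := R)).mpr fun x ↦ hH _ ?_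
    have : (x : H') ∈ (I : LieSubalgebra R H') := x.2
    rwa [hI, mem_ofLe] at this
  have : IsNilpotent H' L :=
    LieSubmodule.isNilpotentOfIsNilpotentSpanSupEqTop hspan (by rwa [toEnd_mk]) hIL
  exact isNilpotent_toEnd_of_isNilpotent R H' L ⟨z, hz⟩

end LieSubalgebra

theorem LieAlgebra.isNilpotent_tensorProduct_iff {R A L : Type*} [CommRing R] [CommRing A]
    [Algebra R A] [Module.FaithfullyFlat R A] [LieRing L] [LieAlgebra R L] :
    LieRing.IsNilpotent (A ⊗[R] L) ↔ LieRing.IsNilpotent L := by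
  refine ⟨fun _ ↦ ?_, fun _ ↦ inferInstance⟩
  obtain ⟨k, hk⟩ := IsNilpotent.nilpotent A (A ⊗[R] L) (A ⊗[R] L)
  refine (isNilpotent_iff R L L).mpr ⟨k, ?_⟩
  rwa [LieSubmodule.lowerCentralSeries_tensor_eq_baseChange, ← LieSubmodule.baseChange_bot,
    ← LieSubmodule.toSubmodule_inj, LieSubmodule.coe_baseChange, LieSubmodule.coe_baseChange,
    Submodule.baseChange_inj, LieSubmodule.toSubmodule_inj] at hk

namespace LieDerivation

section CommRing

variable {R L : Type*} [CommRing R] [LieRing L] [LieAlgebra R L]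

theorem apply_mem_normalizer (D : LieDerivation R L L) {H : LieSubalgebra R L}
    (hH : ∀ x ∈ H, D x ∈ H) {y : L} (hy : y ∈ H.normalizer) : D y ∈ H.normalizer := by
  rw [LieSubalgebra.mem_normalizer_iff'] at hy ⊢
  intro x hx
  rw [← add_sub_cancel_right ⁅x, D y⁆ ⁅D x, y⁆, ← D.apply_lie_eq_add]
  exact H.sub_mem (hH _ (hy x hx)) (hy _ (hH x hx))

theorem lie_mem_maxGenEigenspace (D : LieDerivation R L L) {α β : R} {x y : L}
    (hx : x ∈ End.maxGenEigenspace (D : End R L) α)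
    (hy : y ∈ End.maxGenEigenspace (D : End R L) β) :
    ⁅x, y⁆ ∈ End.maxGenEigenspace (D : End R L) (α + β) := by
  rw [End.mem_maxGenEigenspace] at hx hy ⊢
  obtain ⟨a, ha⟩ := hx
  obtain ⟨b, hb⟩ := hy
  have hleibniz (u v : L) : ((D : End R L) - (α + β) • 1) ⁅u, v⁆ =
      ⁅((D : End R L) - α • 1) u, v⁆ + ⁅u, ((D : End R L) - β • 1) v⁆ := by
    simp only [LinearMap.sub_apply, LinearMap.smul_apply, End.one_apply, sub_lie, lie_sub,
      smul_lie, lie_smul, add_smul, LinearMap.add_apply, coeFn_coe, D.apply_lie_eq_add]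
    abel
  refine ⟨a + b, ?_⟩
  rw [End.pow_apply_lie_of_apply_lie hleibniz]
  refine sum_eq_zero fun ⟨i, j⟩ hij ↦ ?_
  replace hij : i + j = a + b := mem_antidiagonal.mp hij
  rcases le_or_gt a i with hi | hi
  · rw [End.pow_map_zero_of_le hi ha, zero_lie, smul_zero]
  · rw [End.pow_map_zero_of_le (by omega : b ≤ j) hb, lie_zero, smul_zero]

variable (A : Type*) [CommRing A] [Algebra R A] in
def baseChange (D : LieDerivation R L L) : LieDerivation A (A ⊗[R] L) (A ⊗[R] L) where
  toLinearMap := (D : L →ₗ[R] L).baseChange A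
  leibniz' x y := by
    have := (Lie.Derivation.ofLieDerivation A D).apply_lie_eq_sub x y
    simp only [Lie.Derivation.ofLieDerivation_apply] at this
    simpa only [LinearMap.baseChange_eq_ltensor] using this

theorem injective_baseChange {A : Type*} [CommRing A] [Algebra R A] [Module.Flat R A]
    {D : LieDerivation R L L} (hD : Function.Injective D) :
    Function.Injective (D.baseChange A) := by
  change Function.Injective ((D : L →ₗ[R] L).baseChange A)
  rw [LinearMap.baseChange_eq_ltensor]
  exact Module.Flat.lTensor_preserves_injective_linearMap _ hD

end CommRing

variable {K L : Type*} [Field K] [LieRing L] [LieAlgebra K L] [FiniteDimensional K L]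
  (D : LieDerivation K L L) (hD : ⨆ μ, End.maxGenEigenspace (D : End K L) μ = ⊤)
include hD

theorem isNilpotent_ad_of_mem_maxGenEigenspace [CharZero K] {α : K} (hα : α ≠ 0) {x : L}
    (hx : x ∈ End.maxGenEigenspace (D : End K L) α) : IsNilpotent (LieAlgebra.ad K L x) := by
  have hpow (n : ℕ) {β : K} {y : L} (hy : y ∈ End.maxGenEigenspace (D : End K L) β) :
      ((LieAlgebra.ad K L x) ^ n) y ∈ End.maxGenEigenspace (D : End K L) (β + n • α) := by
    induction n with
    | zero => simpa using hy
    | succ n ih =>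
      rw [pow_succ', End.mul_apply, ad_apply, succ_nsmul, ← add_assoc, add_comm _ α]
      exact D.lie_mem_maxGenEigenspace hx ih
  suffices ⊤ ≤ End.maxGenEigenspace (LieAlgebra.ad K L x) 0 by
    refine End.isNilpotent_iff_of_finite.mpr fun m ↦ ?_
    simpa using (End.mem_maxGenEigenspace _ _ _).mp (this Submodule.mem_top)
  rw [← hD]
  refine iSup_le fun β y hy ↦ ?_
  have hsupport : {μ | End.maxGenEigenspace (D : End K L) μ ≠ ⊥}.Finite :=
    WellFoundedGT.finite_ne_bot_of_iSupIndep (End.independent_maxGenEigenspace _)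
  have hinj : Function.Injective fun n : ℕ ↦ β + n • α := fun m n h ↦ by simpa [hα] using h
  obtain ⟨n, hn⟩ := (hsupport.preimage hinj.injOn).exists_notMem
  simp only [Set.mem_preimage, Set.mem_ofPred_eq, not_not] at hn
  have := hpow n hy
  rw [hn, Submodule.mem_bot] at this
  exact (End.mem_maxGenEigenspace _ _ _).mpr ⟨n, by simpa using this⟩

theorem isNilpotent_of_isNilpotent_ad_of_mem_maxGenEigenspace
    (had : ∀ μ, ∀ x ∈ End.maxGenEigenspace (D : End K L) μ, IsNilpotent (LieAlgebra.ad K L x)) :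
    LieRing.IsNilpotent L := by
  let s : Set (LieSubalgebra K L) :=
    {H | (∀ x ∈ H, D x ∈ H) ∧ ∀ x ∈ H, IsNilpotent (LieAlgebra.ad K L x)}
  obtain ⟨H, ⟨hHD, hHad⟩, hHmax⟩ :=
    (LieSubalgebra.wellFoundedGT_of_noetherian K L).wf.has_min s ⟨⊥, by simp [s]⟩
  suffices H = ⊤ from LieAlgebra.isNilpotent_iff_forall.mpr fun x ↦ hHad x (this ▸ trivial)
  by_contra hne
  -- `D y - μ • y ∈ H` is what keeps the enlarged subalgebra `D`-stable.
  obtain ⟨μ, y, hyN, hyμ, hyH, hDy⟩ := End.exists_mem_maxGenEigenspace_notMem hD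
    (p := H.normalizer.toSubmodule) (fun y ↦ D.apply_mem_normalizer hHD)
    (H.lt_normalizer_of_forall_isNilpotent_ad hHad hne).not_ge
  refine hHmax (LieSubalgebra.supSpanSingleton hyN) ⟨fun z hz ↦ ?_, fun z hz ↦
    LieSubalgebra.isNilpotent_ad_of_mem_supSpanSingleton hHad hyN (had μ y hyμ) hz⟩ ?_
  · obtain ⟨_, hc, h, hh, rfl⟩ := Submodule.mem_sup.mp hz
    obtain ⟨c, rfl⟩ := Submodule.mem_span_singleton.mp hc
    rw [map_add, map_smul, ← sub_add_cancel (D y) (μ • y), smul_add, smul_smul, add_comm,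
      ← add_assoc]
    exact Submodule.mem_sup.mpr ⟨_, Submodule.smul_mem _ _ (Submodule.mem_span_singleton_self y),
      _, H.add_mem (hHD h hh) (H.smul_mem c hDy), add_comm _ _⟩
  · exact SetLike.lt_iff_le_and_exists.mpr ⟨fun x hx ↦ Submodule.mem_sup_right hx,
      y, Submodule.mem_sup_left (Submodule.mem_span_singleton_self y), hyH⟩

end LieDerivation

/-- Jacobson: a finite-dimensional Lie algebra over a field of characteristic zero
admitting a nonsingular (bijective) derivation is nilpotent. -/
theorem nilpotent_of_nonsingular_derivation
    (K : Type*) (L : Type*) [Field K] [CharZero K]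
    [LieRing L] [LieAlgebra K L] [FiniteDimensional K L]
    (D : LieDerivation K L L) (hD : Function.Bijective D) :
    LieRing.IsNilpotent L := by
  let F := AlgebraicClosure K
  let DF := D.baseChange F
  have hspan : ⨆ μ, End.maxGenEigenspace (DF : End F (F ⊗[K] L)) μ = ⊤ :=
    End.iSup_maxGenEigenspace_eq_top _
  have hzero : End.maxGenEigenspace (DF : End F (F ⊗[K] L)) 0 = ⊥ :=
    End.maxGenEigenspace_zero_eq_bot (LieDerivation.injective_baseChange hD.injective)
  refine isNilpotent_tensorProduct_iff.mp <|
    DF.isNilpotent_of_isNilpotent_ad_of_mem_maxGenEigenspace hspan fun μ x hx ↦ ?_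
  rcases eq_or_ne μ 0 with rfl | hμ
  · rw [hzero, Submodule.mem_bot] at hx
    simp [hx]
  · exact DF.isNilpotent_ad_of_mem_maxGenEigenspace hspan hμ hx
end

section
/- Let 𝔤 be a Lie algebra over a field of characteristic zero admitting a nonsingular derivation D. Then the bilinear product defined by x · y := D⁻¹([x, D(y)]) is a pre-Lie algebra structure on 𝔤, i.e., it satisfies [x,y] = x·y − y·x and [x,y]·z = x·(y·z) − y·(x·z) for all x,y,z ∈ 𝔤. -/
/-- If `D` is a nonsingular derivation of a Lie algebra `𝔤` over a field of characteristic
zero (given here as a linear equivalence `D` satisfying the derivation identity), then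
`x · y := D⁻¹ [x, D y]` defines a pre-Lie algebra structure on `𝔤`. -/
theorem preLie_structure_of_nonsingular_derivation
    (K : Type*) (L : Type*) [Field K] [CharZero K]
    [LieRing L] [LieAlgebra K L]
    (D : L ≃ₗ[K] L) (hD : ∀ x y : L, D ⁅x, y⁆ = ⁅D x, y⁆ + ⁅x, D y⁆) :
    (∀ x y : L, ⁅x, y⁆ = D.symm ⁅x, D y⁆ - D.symm ⁅y, D x⁆) ∧
    (∀ x y z : L, D.symm ⁅⁅x, y⁆, D z⁆ =
      D.symm ⁅x, D (D.symm ⁅y, D z⁆)⁆ - D.symm ⁅y, D (D.symm ⁅x, D z⁆)⁆) := by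
  constructor
  · intro x y
    have : D ⁅x, y⁆ = ⁅x, D y⁆ - ⁅y, D x⁆ := by
      rw [hD x y, ← lie_skew y (D x)]; abel
    calc ⁅x, y⁆ = D.symm (D ⁅x, y⁆) := (D.symm_apply_apply _).symm
    _ = D.symm ⁅x, D y⁆ - D.symm ⁅y, D x⁆ := by rw [this, map_sub]
  · intro x y z
    rw [D.apply_symm_apply, D.apply_symm_apply, ← map_sub]
    congr 1
    rw [lie_lie]
end

section
/- Let 𝔤 be an n-dimensional Lie algebra over a field K. Then 𝔤 admits a pre-Lie algebra structure if and only if there is an n-dimensional 𝔤-module M together with a bijective linear map I: 𝔤 → M satisfying the 1-cocycle condition I([x,y]) = x • I(y) − y • I(x) for all x,y ∈ 𝔤. -/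
/-- A bilinear product `x · y` on a Lie algebra `𝔤` is a pre-Lie algebra structure if
`[x,y] = x·y − y·x` and `[x,y]·z = x·(y·z) − y·(x·z)`. -/
def IsPreLieStructure {K L : Type*} [Field K] [LieRing L] [LieAlgebra K L]
    (mul : L →ₗ[K] L →ₗ[K] L) : Prop :=
  (∀ x y : L, ⁅x, y⁆ = mul x y - mul y x) ∧
  (∀ x y z : L, mul ⁅x, y⁆ z = mul x (mul y z) - mul y (mul x z))

attribute [local instance 100] LieRing.ofAssociativeRing

/-!
The second pre-Lie axiom says exactly that left multiplication `x ↦ (y ↦ x·y)` is a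
representation of `𝔤` on itself, and the first that the identity `𝔤 → 𝔤` is a `1`-cocycle
for it. Conversely a nonsingular cocycle `I : 𝔤 → M` can be pulled back along `I` to the
cocycle `id` for the representation `x ↦ I⁻¹ ∘ ρ x ∘ I` on `𝔤`, which is then a pre-Lie
product. Since `1`-cocycles transport along linear isomorphisms of modules, `M` may be taken
to be `Kⁿ`.
-/

section

variable {R L M N : Type*} [CommRing R] [LieRing L] [LieAlgebra R L]
  [AddCommGroup M] [Module R M] [AddCommGroup N] [Module R N]

def IsOneCocycle (ρ : L →ₗ⁅R⁆ Module.End R M) (I : L →ₗ[R] M) : Prop :=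
  ∀ x y : L, I ⁅x, y⁆ = ρ x (I y) - ρ y (I x)

theorem IsOneCocycle.lieConj {ρ : L →ₗ⁅R⁆ Module.End R M} {I : L →ₗ[R] M}
    (hI : IsOneCocycle ρ I) (e : M ≃ₗ[R] N) :
    IsOneCocycle (e.lieConj.toLieHom.comp ρ) (e.toLinearMap ∘ₗ I) := fun x y => by
  simp [hI x y]

end

section

variable {K L M : Type*} [Field K] [LieRing L] [LieAlgebra K L] [AddCommGroup M] [Module K M]

namespace IsPreLieStructure

variable {mul : L →ₗ[K] L →ₗ[K] L}

def leftMul (h : IsPreLieStructure mul) : L →ₗ⁅K⁆ Module.End K L :=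
  { mul with
    map_lie' := fun {x y} => LinearMap.ext fun z => by
      simp [Ring.lie_def, h.2] }

theorem isOneCocycle_id_leftMul (h : IsPreLieStructure mul) :
    IsOneCocycle h.leftMul LinearMap.id :=
  h.1

end IsPreLieStructure

theorem IsOneCocycle.isPreLieStructure {σ : L →ₗ⁅K⁆ Module.End K L}
    (hσ : IsOneCocycle σ LinearMap.id) : IsPreLieStructure (σ : L →ₗ[K] Module.End K L) :=
  ⟨hσ, fun x y z => by simp [Ring.lie_def]⟩

theorem IsOneCocycle.isPreLieStructure_lieConj_symm {ρ : L →ₗ⁅K⁆ Module.End K M}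
    {I : L ≃ₗ[K] M} (hI : IsOneCocycle ρ I) :
    IsPreLieStructure ((I.symm.lieConj.toLieHom.comp ρ : L →ₗ⁅K⁆ Module.End K L) :
      L →ₗ[K] Module.End K L) := by
  have hid := hI.lieConj I.symm
  rw [LinearEquiv.symm_comp] at hid
  exact hid.isPreLieStructure

end

/-- An `n`-dimensional Lie algebra `𝔤` admits a pre-Lie algebra structure if and only if
there is an `n`-dimensional `𝔤`-module `M` with a nonsingular (bijective) `1`-cocycle
`I : 𝔤 → M`, i.e. `I [x,y] = x • I y − y • I x`. -/
theorem preLie_iff_exists_nonsingular_one_cocycle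
    (K : Type*) (L : Type*) [Field K] [LieRing L] [LieAlgebra K L]
    [FiniteDimensional K L] (n : ℕ) (hn : Module.finrank K L = n) :
    (∃ mul : L →ₗ[K] L →ₗ[K] L, IsPreLieStructure mul) ↔
    (∃ ρ : L →ₗ⁅K⁆ Module.End K (Fin n → K), ∃ I : L ≃ₗ[K] (Fin n → K),
      ∀ x y : L, I ⁅x, y⁆ = ρ x (I y) - ρ y (I x)) := by
  constructor
  · rintro ⟨mul, h⟩
    let e : L ≃ₗ[K] (Fin n → K) := (Module.finBasisOfFinrankEq K L hn).equivFun
    exact ⟨_, e, h.isOneCocycle_id_leftMul.lieConj e⟩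
  · rintro ⟨ρ, I, hI⟩
    exact ⟨_, IsOneCocycle.isPreLieStructure_lieConj_symm (I := I) hI⟩
end

section
/- Let 𝔤 be an n-dimensional Lie algebra over a field K of characteristic zero which admits a pre-Lie algebra structure. Then 𝔤 admits a faithful linear representation of degree n+1, i.e., an injective Lie algebra homomorphism φ: 𝔤 → 𝔤𝔩ₙ₊₁(K). -/
attribute [local instance 100] LieRing.ofAssociativeRing

/-!
A pre-Lie product lets `L` act on itself by the affine maps `v ↦ x · v + x`; linearising on
`L × K` gives `ρ x (v, t) = (x · v + t x, 0)`. The pre-Lie identities say exactly that `ρ` is a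
Lie algebra homomorphism, and `ρ x (0, 1) = (x, 0)` makes it injective. A basis of the
`(n + 1)`-dimensional space `L × K` then turns `ρ` into a representation by matrices.
-/

namespace IsPreLieStructure

variable {K L : Type*} [Field K] [LieRing L] [LieAlgebra K L]

def affineRep (mul : L →ₗ[K] L →ₗ[K] L) : L →ₗ[K] Module.End K (L × K) where
  toFun x := LinearMap.inl K L K ∘ₗ (mul x).coprod (LinearMap.toSpanSingleton K L x)
  map_add' x y := by ext <;> simp
  map_smul' c x := by ext <;> simp

variable {mul : L →ₗ[K] L →ₗ[K] L}

@[simp]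
theorem affineRep_apply (x : L) (p : L × K) :
    affineRep mul x p = (mul x p.1 + p.2 • x, 0) := by
  simp [affineRep]

theorem affineRep_injective : Function.Injective (affineRep mul) := fun x y hxy => by
  simpa using congr_arg (fun f : Module.End K (L × K) => (f (0, 1)).1) hxy

theorem affineRep_lie (h : IsPreLieStructure mul) (x y : L) :
    affineRep mul ⁅x, y⁆ = ⁅affineRep mul x, affineRep mul y⁆ := by
  refine LinearMap.ext fun p => Prod.ext ?_ (by simp [Ring.lie_def])
  simp only [Ring.lie_def, LinearMap.sub_apply, Module.End.mul_apply, affineRep_apply,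
    Prod.fst_sub]
  rw [h.2 x y p.1, h.1 x y]
  simp only [map_add, map_smul, smul_sub, zero_smul, add_zero]
  abel

def affineLieHom (h : IsPreLieStructure mul) : L →ₗ⁅K⁆ Module.End K (L × K) :=
  { affineRep mul with map_lie' := h.affineRep_lie _ _ }

end IsPreLieStructure

theorem LieHom.exists_injective_matrix_of_injective {K L V : Type*} [Field K] [LieRing L]
    [LieAlgebra K L] [AddCommGroup V] [Module K V] [FiniteDimensional K V] {m : ℕ}
    (hV : Module.finrank K V = m) (ρ : L →ₗ⁅K⁆ Module.End K V) (hρ : Function.Injective ρ) :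
    ∃ φ : L →ₗ⁅K⁆ Matrix (Fin m) (Fin m) K, Function.Injective φ :=
  let b := (Module.finBasis K V).reindex (finCongr hV)
  ⟨(LinearMap.toMatrixAlgEquiv b).toLieEquiv.toLieHom.comp ρ,
    (LinearMap.toMatrixAlgEquiv b).toLieEquiv.injective.comp hρ⟩

theorem faithful_rep_of_preLie_structure_general
    (K : Type*) (L : Type*) [Field K]
    [LieRing L] [LieAlgebra K L] [FiniteDimensional K L]
    (n : ℕ) (hn : Module.finrank K L = n)
    (h : ∃ mul : L →ₗ[K] L →ₗ[K] L, IsPreLieStructure mul) :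
    ∃ φ : L →ₗ⁅K⁆ Matrix (Fin (n + 1)) (Fin (n + 1)) K, Function.Injective φ := by
  obtain ⟨mul, hmul⟩ := h
  have hdim : Module.finrank K (L × K) = n + 1 := by
    rw [Module.finrank_prod, hn, Module.finrank_self]
  exact LieHom.exists_injective_matrix_of_injective hdim hmul.affineLieHom
    IsPreLieStructure.affineRep_injective

/-- An `n`-dimensional Lie algebra over a field of characteristic zero admitting a
pre-Lie algebra structure admits a faithful linear representation of degree `n + 1`. -/
theorem faithful_rep_of_preLie_structure
    (K : Type*) (L : Type*) [Field K] [CharZero K]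
    [LieRing L] [LieAlgebra K L] [FiniteDimensional K L]
    (n : ℕ) (hn : Module.finrank K L = n)
    (h : ∃ mul : L →ₗ[K] L →ₗ[K] L, IsPreLieStructure mul) :
    ∃ φ : L →ₗ⁅K⁆ Matrix (Fin (n + 1)) (Fin (n + 1)) K, Function.Injective φ :=
  faithful_rep_of_preLie_structure_general K L n hn h
end
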